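/- Let f : ℝ × ℝ → ℝ be continuously differentiable with ∂f/∂v > 0 everywhere. Suppose ρ₁, ρ₂ : (0,L) → ℝ are twice differentiable, ρ₁(x) ≥ ρ₂(x) on (0,L) with equality at x_c ∈ (0,L), and the functions satisfy the strict inequality (d/dx) f(ρ₁(x), ρ₁'(x))|_{x_c} < (d/dx) f(ρ₂(x), ρ₂'(x))|_{x_c}. Then a contradiction follows; i.e., no such configuration exists satisfying additionally ρ₁''(x_c) ≥ ρ₂''(x_c). -/

import Mathlib

open Set Filter Topology

/-
At the touching point `x_c` the difference `ρ₁ - ρ₂` has an interior minimum, so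
`ρ₁' x_c = ρ₂' x_c`. The two curves `x ↦ (ρᵢ x, ρᵢ' x)` therefore pass
through the same point of the plane, and their velocities there differ only by
`(ρ₁'' x_c - ρ₂'' x_c) • (0, 1)`. By the chain rule `D₁ - D₂` is this difference times `∂f/∂v > 0`,
so `D₁ < D₂` forces `ρ₁'' x_c < ρ₂'' x_c`.
-/

theorem HasDerivAt.eq_of_eventuallyLE_of_eq {f g : ℝ → ℝ} {f' g' x : ℝ}
    (hf : HasDerivAt f f' x) (hg : HasDerivAt g g' x) (hle : g ≤ᶠ[𝓝 x] f) (heq : f x = g x) :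
    f' = g' := by
  have hmin : IsLocalMin (fun y => f y - g y) x := by
    filter_upwards [hle] with y hy
    rw [heq, sub_self]
    exact sub_nonneg.mpr hy
  exact sub_eq_zero.mp (hmin.hasDerivAt_eq_zero (hf.sub hg))

theorem HasDerivAt.sub_eq_fderiv_sub_of_comp {E F : Type*} [NormedAddCommGroup E]
    [NormedSpace ℝ E] [NormedAddCommGroup F] [NormedSpace ℝ F] {f : E → F} {γ₁ γ₂ : ℝ → E}
    {v₁ v₂ : E} {D₁ D₂ : F} {x : ℝ} (hf : DifferentiableAt ℝ f (γ₁ x))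
    (hγ₁ : HasDerivAt γ₁ v₁ x) (hγ₂ : HasDerivAt γ₂ v₂ x) (hγ : γ₁ x = γ₂ x)
    (hD₁ : HasDerivAt (f ∘ γ₁) D₁ x) (hD₂ : HasDerivAt (f ∘ γ₂) D₂ x) :
    D₁ - D₂ = fderiv ℝ f (γ₁ x) (v₁ - v₂) := by
  have hf₂ : HasFDerivAt f (fderiv ℝ f (γ₁ x)) (γ₂ x) := hγ ▸ hf.hasFDerivAt
  rw [hD₁.unique (hf.hasFDerivAt.comp_hasDerivAt x hγ₁), hD₂.unique (hf₂.comp_hasDerivAt x hγ₂),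
    map_sub]

/-- Core contradiction of Lemma 1: `f` is `C¹` with strictly positive partial derivative in
its second argument; `ρ₁ ≥ ρ₂` on `(0,L)` with equality at an interior point `x_c`; the
spatial derivative of `f (ρ₁, ρ₁')` at `x_c` is strictly less than that of `f (ρ₂, ρ₂')`;
then the additional condition `ρ₁'' x_c ≥ ρ₂'' x_c` is contradictory. -/
theorem stmt_8 (L : ℝ) (f : ℝ × ℝ → ℝ)
    (hf : ContDiff ℝ 1 f)
    (hfv : ∀ p : ℝ × ℝ, 0 < fderiv ℝ f p (0, 1))
    (ρ₁ ρ₂ ρ₁' ρ₂' ρ₁'' ρ₂'' : ℝ → ℝ)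
    (hρ₁ : ∀ x ∈ Ioo (0:ℝ) L, HasDerivAt ρ₁ (ρ₁' x) x)
    (hρ₂ : ∀ x ∈ Ioo (0:ℝ) L, HasDerivAt ρ₂ (ρ₂' x) x)
    (hρ₁' : ∀ x ∈ Ioo (0:ℝ) L, HasDerivAt ρ₁' (ρ₁'' x) x)
    (hρ₂' : ∀ x ∈ Ioo (0:ℝ) L, HasDerivAt ρ₂' (ρ₂'' x) x)
    (hord : ∀ x ∈ Ioo (0:ℝ) L, ρ₂ x ≤ ρ₁ x)
    (x_c : ℝ) (hx_c : x_c ∈ Ioo (0:ℝ) L) (heq : ρ₁ x_c = ρ₂ x_c)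
    (D₁ D₂ : ℝ)
    (hD₁ : HasDerivAt (fun x => f (ρ₁ x, ρ₁' x)) D₁ x_c)
    (hD₂ : HasDerivAt (fun x => f (ρ₂ x, ρ₂' x)) D₂ x_c)
    (hlt : D₁ < D₂)
    (hsecond : ρ₂'' x_c ≤ ρ₁'' x_c) :
    False := by
  have hord_near : ρ₂ ≤ᶠ[𝓝 x_c] ρ₁ :=
    eventually_of_mem (isOpen_Ioo.mem_nhds hx_c) hord
  have hslope : ρ₁' x_c = ρ₂' x_c :=
    (hρ₁ x_c hx_c).eq_of_eventuallyLE_of_eq (hρ₂ x_c hx_c) hord_near heq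
  have hvel : (ρ₁' x_c, ρ₁'' x_c) - (ρ₂' x_c, ρ₂'' x_c)
      = (ρ₁'' x_c - ρ₂'' x_c) • ((0 : ℝ), (1 : ℝ)) := by
    simp [hslope]
  have hgap : D₁ - D₂ = (ρ₁'' x_c - ρ₂'' x_c) * fderiv ℝ f (ρ₁ x_c, ρ₁' x_c) (0, 1) := by
    rw [HasDerivAt.sub_eq_fderiv_sub_of_comp (hf.differentiable one_ne_zero _)
      ((hρ₁ x_c hx_c).prodMk (hρ₁' x_c hx_c)) ((hρ₂ x_c hx_c).prodMk (hρ₂' x_c hx_c))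
      (by rw [heq, hslope]) hD₁ hD₂, hvel, map_smul, smul_eq_mul]
  nlinarith [hfv (ρ₁ x_c, ρ₁' x_c)]
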